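/- arXiv:0910.4666 — 2 statements merged into one kernel-verified Lean document; each statement's English description precedes it below -/
import Mathlib

section
/- Let L = L_0 ⊕ L_1 be a real Lie superalgebra. Define A_ℓ = L_ℓ × L_{ℓ+1} for ℓ ∈ Z_2, and for x = (x1,x2) ∈ A_1 and y = (y1,y2) ∈ A_ℓ define D_x y = (y2 − ε_ℓ[x1,y1], ε_ℓ[x1,y2] + ε_ℓ[y1,x2]) ∈ A_{ℓ+1}, where ε_0 = 1 and ε_1 = 1/2. Then for all x ∈ A_1, D_x(D_x x) = 0. -/
/-- The sign `(-1)^{k₁ k₂}` for degrees `k₁, k₂ ∈ ℤ/2`, as a real number. -/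
noncomputable def ssign (i j : ZMod 2) : ℝ := if i = 1 ∧ j = 1 then -1 else 1

/-- The operator `D` of the paper: for `x ∈ A₁ = L₁ × L₀` and `y ∈ A_ℓ = L_ℓ × L_{ℓ+1}`,
`D_x y = (y₂ − ε[x₁,y₁], ε[x₁,y₂] + ε[y₁,x₂])`, where `ε = ε_ℓ` (`ε₀ = 1`, `ε₁ = 1/2`). -/
def Dop {L : Type*} [AddCommGroup L] [Module ℝ L]
    (br : L →ₗ[ℝ] L →ₗ[ℝ] L) (ε : ℝ) (x y : L × L) : L × L :=
  (y.2 - ε • br x.1 y.1, ε • br x.1 y.2 + ε • br y.1 x.2)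

/-- For every `x ∈ A₁`, `D_x (D_x x) = 0`.  Here `x = (x₁,x₂)` with `x₁ ∈ L₁` odd and
`x₂ ∈ L₀` even; `D_x x` is computed with `ε₁ = 1/2`, and the second application with `ε₀ = 1`. -/
theorem Dop_Dop_self_eq_zero
    {L : Type*} [AddCommGroup L] [Module ℝ L]
    (Lg : ZMod 2 → Submodule ℝ L)
    (br : L →ₗ[ℝ] L →ₗ[ℝ] L)
    (hgrade : ∀ (k₁ k₂ : ZMod 2), ∀ x₁ ∈ Lg k₁, ∀ x₂ ∈ Lg k₂,
      br x₁ x₂ ∈ Lg (k₁ + k₂))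
    (hskew : ∀ (k₁ k₂ : ZMod 2), ∀ x₁ ∈ Lg k₁, ∀ x₂ ∈ Lg k₂,
      br x₁ x₂ = (-(ssign k₁ k₂)) • br x₂ x₁)
    (hjacobi : ∀ (k₁ k₂ k₃ : ZMod 2), ∀ x₁ ∈ Lg k₁, ∀ x₂ ∈ Lg k₂, ∀ x₃ ∈ Lg k₃,
      ssign k₁ k₃ • br x₁ (br x₂ x₃) + ssign k₂ k₁ • br x₂ (br x₃ x₁)
        + ssign k₃ k₂ • br x₃ (br x₁ x₂) = 0)
    (x : L × L) (hx₁ : x.1 ∈ Lg 1) (hx₂ : x.2 ∈ Lg 0) :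
    Dop br 1 (x) (Dop br (1/2 : ℝ) x x) = 0 := by
  obtain ⟨x₁, x₂⟩ := x
  simp only at hx₁ hx₂
  have hs11 : ssign 1 1 = -1 := by simp [ssign]
  have hs10 : ssign 1 0 = 1 := by simp [ssign]
  have hs01 : ssign 0 1 = 1 := by simp [ssign]
  have hs00 : ssign 0 0 = 1 := by simp [ssign]
  -- [x₁,[x₁,x₁]] = 0
  have h1 : br x₁ (br x₁ x₁) = 0 := by
    have j := hjacobi 1 1 1 x₁ hx₁ x₁ hx₁ x₁ hx₁
    rw [hs11] at j
    linear_combination (norm := module) (-(1/3 : ℝ)) • j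
  -- [x₂,x₂] = 0
  have h2 : br x₂ x₂ = 0 := by
    have s := hskew 0 0 x₂ hx₂ x₂ hx₂
    rw [hs00] at s
    linear_combination (norm := module) (1/2 : ℝ) • s
  -- [x₂,x₁] = -[x₁,x₂]
  have hsk : br x₂ x₁ = (-1 : ℝ) • br x₁ x₂ := by
    have s := hskew 0 1 x₂ hx₂ x₁ hx₁
    rw [hs01] at s
    exact s
  -- [x₁,[x₁,x₂]] = -(1/2)[x₂,[x₁,x₁]]
  have h3 : br x₁ (br x₁ x₂) = (-(1/2) : ℝ) • br x₂ (br x₁ x₁) := by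
    have j := hjacobi 1 1 0 x₁ hx₁ x₁ hx₁ x₂ hx₂
    rw [hs10, hs11, hs01, hsk, map_smul] at j
    linear_combination (norm := module) (1/2 : ℝ) • j
  -- [[x₁,x₁],x₂] = -[x₂,[x₁,x₁]]
  have hb11 : br x₁ x₁ ∈ Lg 0 := by
    have h := hgrade 1 1 x₁ hx₁ x₁ hx₁
    norm_num at h
    exact h
  have h4 : br (br x₁ x₁) x₂ = (-1 : ℝ) • br x₂ (br x₁ x₁) := by
    have s := hskew 0 0 (br x₁ x₁) hb11 x₂ hx₂
    rw [hs00] at s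
    exact s
  simp only [Dop, Prod.mk.injEq, Prod.fst_zero, Prod.snd_zero, map_sub, map_add, map_smul,
    LinearMap.sub_apply, LinearMap.add_apply, LinearMap.smul_apply, Prod.ext_iff]
  constructor
  · linear_combination (norm := module) (1/2 : ℝ) • h1
  · linear_combination (norm := module) h2 + h3 + (-(1/2) : ℝ) • h4
end

section
/- Let g be a nondegenerate symmetric 4×4 real matrix. The real vector space of matrices Y = (Y_m^n) satisfying Y_m^ℓ g_{ℓn} + Y_n^ℓ g_{ℓm} = (1/2) Y_ℓ^ℓ g_{mn} has dimension 7. -/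
open Matrix

namespace ConfAux

abbrev Idx := {p : Fin 4 × Fin 4 // p.1 < p.2}

example : Fintype.card Idx = 6 := by decide

noncomputable def L (g : Matrix (Fin 4) (Fin 4) ℝ) :
    Matrix (Fin 4) (Fin 4) ℝ →ₗ[ℝ] Matrix (Fin 4) (Fin 4) ℝ where
  toFun Y := Y * g + (Y * g)ᵀ - ((1/2 : ℝ) * Matrix.trace Y) • g
  map_add' Y Z := by
    simp only [add_mul, Matrix.transpose_add, Matrix.trace_add, mul_add, add_smul]
    abel
  map_smul' a Y := by
    simp only [Matrix.smul_mul, Matrix.transpose_smul, Matrix.trace_smul, smul_eq_mul,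
      RingHom.id_apply]
    module

def Msk : (Idx → ℝ) →ₗ[ℝ] Matrix (Fin 4) (Fin 4) ℝ where
  toFun f := Matrix.of fun i j =>
    if h : i < j then f ⟨(i, j), h⟩ else if h' : j < i then -f ⟨(j, i), h'⟩ else 0
  map_add' f₁ f₂ := by
    ext i j
    simp only [Matrix.of_apply, Pi.add_apply, Matrix.add_apply]
    split <;> try (first | ring | (split <;> try ring) | rfl)
  map_smul' a f := by
    ext i j
    simp only [Matrix.of_apply, Pi.smul_apply, Matrix.smul_apply, smul_eq_mul, RingHom.id_apply]
    split <;> try (first | ring | (split <;> try ring) | rfl)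

lemma Msk_skew (f : Idx → ℝ) : (Msk f)ᵀ = -(Msk f) := by
  ext i j
  rcases lt_trichotomy i j with h | h | h
  · simp [Msk, Matrix.transpose_apply, h, h.asymm]
  · simp [Msk, Matrix.transpose_apply, h]
  · simp [Msk, Matrix.transpose_apply, h, h.asymm]

lemma trace_skew_mul_symm {n : Type*} [Fintype n] (B h : Matrix n n ℝ)
    (hB : Bᵀ = -B) (hh : hᵀ = h) : Matrix.trace (B * h) = 0 := by
  have key : Matrix.trace (B * h) = -Matrix.trace (B * h) := by
    conv_lhs => rw [← Matrix.trace_transpose, Matrix.transpose_mul, hh, hB]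
    rw [Matrix.mul_neg, Matrix.trace_neg, Matrix.trace_mul_comm]
  linarith

end ConfAux

open ConfAux in
/-- Let `g` be a nondegenerate symmetric 4×4 real matrix.  The space of matrices
`Y = (Y_m{}^n)` satisfying `Y_m{}^ℓ g_{ℓn} + Y_n{}^ℓ g_{ℓm} = (1/2) Y_ℓ{}^ℓ g_{mn}`
has real dimension 7. -/
theorem conformal_orthogonal_matrices_dim_seven
    (g : Matrix (Fin 4) (Fin 4) ℝ) (hsymm : gᵀ = g) (hnondeg : IsUnit g) :
    ∃ S : Submodule ℝ (Matrix (Fin 4) (Fin 4) ℝ),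
      (S : Set (Matrix (Fin 4) (Fin 4) ℝ)) =
        {Y | ∀ m n, (∑ ℓ, Y m ℓ * g ℓ n) + (∑ ℓ, Y n ℓ * g ℓ m)
          = (1/2 : ℝ) * (∑ ℓ, Y ℓ ℓ) * g m n} ∧
      Module.finrank ℝ S = 7 := by
  classical
  have hdet : IsUnit g.det := (Matrix.isUnit_iff_isUnit_det g).mp hnondeg
  have hgi : g * g⁻¹ = 1 := Matrix.mul_nonsing_inv g hdet
  have hginv_symm : (g⁻¹)ᵀ = g⁻¹ := by
    rw [Matrix.transpose_nonsing_inv, hsymm]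
  refine ⟨LinearMap.ker (L g), ?_, ?_⟩
  · ext Y
    simp only [SetLike.mem_coe, LinearMap.mem_ker, L, LinearMap.coe_mk, AddHom.coe_mk,
      Set.mem_setOf_eq, sub_eq_zero]
    rw [← Matrix.ext_iff]
    constructor
    · intro hY m n
      have := hY m n
      simpa [Matrix.mul_apply, Matrix.add_apply, Matrix.transpose_apply, Matrix.smul_apply,
        Matrix.trace, Matrix.diag, mul_assoc, mul_comm] using this
    · intro hY m n
      have := hY m n
      simpa [Matrix.mul_apply, Matrix.add_apply, Matrix.transpose_apply, Matrix.smul_apply,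
        Matrix.trace, Matrix.diag, mul_assoc, mul_comm] using this
  · -- build the linear equivalence with ℝ × (Idx → ℝ)
    have hXg : ∀ (c : ℝ) (f : Idx → ℝ), (c • g + Msk f) * g⁻¹ * g = c • g + Msk f :=
      fun c f => Matrix.nonsing_inv_mul_cancel_right g _ hdet
    have htr : ∀ (c : ℝ) (f : Idx → ℝ),
        Matrix.trace ((c • g + Msk f) * g⁻¹) = 4 * c := by
      intro c f
      rw [Matrix.add_mul, Matrix.smul_mul, Matrix.trace_add, Matrix.trace_smul, hgi,
        trace_skew_mul_symm _ _ (Msk_skew f) hginv_symm, Matrix.trace_one]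
      simp
      ring
    have hmem : ∀ (c : ℝ) (f : Idx → ℝ), (c • g + Msk f) * g⁻¹ ∈ LinearMap.ker (L g) := by
      intro c f
      simp only [LinearMap.mem_ker, L, LinearMap.coe_mk, AddHom.coe_mk, hXg, htr]
      rw [Matrix.transpose_add, Matrix.transpose_smul, hsymm, Msk_skew]
      module
    let φ : (ℝ × (Idx → ℝ)) →ₗ[ℝ] Matrix (Fin 4) (Fin 4) ℝ :=
      { toFun := fun p => (p.1 • g + Msk p.2) * g⁻¹
        map_add' := by
          intro p q
          show ((p.1 + q.1) • g + Msk (p.2 + q.2)) * g⁻¹ = _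
          rw [map_add, add_smul]
          simp only [Matrix.add_mul]
          abel
        map_smul' := by
          intro a p
          show ((a * p.1) • g + Msk (a • p.2)) * g⁻¹ = a • ((p.1 • g + Msk p.2) * g⁻¹)
          rw [Msk.map_smul, mul_smul, ← smul_add, Matrix.smul_mul] }
    let e : (ℝ × (Idx → ℝ)) ≃ₗ[ℝ] LinearMap.ker (L g) :=
      { toLinearMap := φ.codRestrict (LinearMap.ker (L g)) (fun p => hmem p.1 p.2)
        invFun := fun Y => (Matrix.trace (Y : Matrix (Fin 4) (Fin 4) ℝ) / 4,
          fun p => ((Y : Matrix (Fin 4) (Fin 4) ℝ) * g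
            - (Matrix.trace (Y : Matrix (Fin 4) (Fin 4) ℝ) / 4) • g) p.1.1 p.1.2)
        left_inv := by
          rintro ⟨c, f⟩
          show (Matrix.trace ((c • g + Msk f) * g⁻¹) / 4,
            fun p => ((c • g + Msk f) * g⁻¹ * g
              - (Matrix.trace ((c • g + Msk f) * g⁻¹) / 4) • g) p.1.1 p.1.2) = (c, f)
          have h4 : (4 : ℝ) * c / 4 = c := by ring
          simp only [htr, hXg, h4, add_sub_cancel_left]
          refine Prod.ext rfl ?_
          funext p
          show (Msk f) p.1.1 p.1.2 = f p
          simp [Msk, p.2]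
        right_inv := by
          rintro ⟨Y, hY⟩
          have h : Y * g + (Y * g)ᵀ - ((1/2 : ℝ) * Matrix.trace Y) • g = 0 := by
            simpa only [L, LinearMap.mem_ker, LinearMap.coe_mk, AddHom.coe_mk] using hY
          have h2 : (Y * g)ᵀ = ((1/2 : ℝ) * Matrix.trace Y) • g - Y * g :=
            eq_sub_of_add_eq' (sub_eq_zero.mp (by rw [sub_eq_zero] at h ⊢; exact h))
          set t := Matrix.trace Y with ht
          set B : Matrix (Fin 4) (Fin 4) ℝ := Y * g - (t / 4) • g with hBdef
          have hBskew : Bᵀ = -B := by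
            rw [hBdef, Matrix.transpose_sub, Matrix.transpose_smul, hsymm, h2]
            module
          have hMB : Msk (fun p => B p.1.1 p.1.2) = B := by
            ext i j
            rcases lt_trichotomy i j with hij | hij | hij
            · simp [Msk, hij]
            · subst hij
              have := congrFun (congrFun hBskew i) i
              simp only [Matrix.transpose_apply, Matrix.neg_apply] at this
              simp [Msk]
              linarith
            · have := congrFun (congrFun hBskew j) i
              simp only [Matrix.transpose_apply, Matrix.neg_apply] at this
              simp [Msk, hij, hij.asymm]
              linarith
          apply Subtype.ext
          show ((t / 4) • g + Msk (fun p => B p.1.1 p.1.2)) * g⁻¹ = Y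
          rw [hMB, hBdef]
          rw [add_comm, sub_add_cancel]
          exact Matrix.mul_nonsing_inv_cancel_right g Y hdet }
    rw [e.symm.finrank_eq, Module.finrank_prod, Module.finrank_self,
      Module.finrank_fintype_fun_eq_card]
    rfl
end
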